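/- Let F be a separable complex Hilbert space and let B be a bounded operator on L²([0,1], F) that commutes with E_{0,s}^F and with E_{1,s}^F for every 0 ≤ s < 1. Then there exists a bounded operator C on F such that for every f ∈ L²([0,1], F), (B f)(x) = C(f(x)) for a.e. x ∈ [0,1] (i.e., B = I_{L²[0,1]} ⊗ C under the natural identification L²[0,1] ⊗ F ≅ L²([0,1], F)). -/

import Mathlib

set_option maxHeartbeats 4000000


open MeasureTheory ContinuousLinearMap
open scoped ENNReal NNReal InnerProductSpace ComplexInnerProductSpace

noncomputable section

/-- Lebesgue measure restricted to `[0, 1]`; `Lp F 2 muI` plays the role of `L²([0,1], F)`. -/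
def muI : Measure ℝ := (volume : Measure ℝ).restrict (Set.Icc 0 1)

/-- `T` is the operator `E_{0,s}^F` on `L²([0,1], F)`:
`(T f)(x) = f (x - s)` for `s ≤ x ≤ 1` and `(T f)(x) = 0` for `x < s`. -/
def IsE0 (F : Type) [NormedAddCommGroup F] [InnerProductSpace ℂ F]
    (s : ℝ) (T : Lp F 2 muI →L[ℂ] Lp F 2 muI) : Prop :=
  ∀ f : Lp F 2 muI,
    (T f : ℝ → F) =ᵐ[muI] fun x => if s ≤ x then (f : ℝ → F) (x - s) else 0

/-- `T` is the operator `E_{1,s}^F` on `L²([0,1], F)`: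
`(T f)(x) = f (1 - s + x)` for `x ≤ s` and `(T f)(x) = 0` for `s < x ≤ 1`. -/
def IsE1 (F : Type) [NormedAddCommGroup F] [InnerProductSpace ℂ F]
    (s : ℝ) (T : Lp F 2 muI →L[ℂ] Lp F 2 muI) : Prop :=
  ∀ f : Lp F 2 muI,
    (T f : ℝ → F) =ᵐ[muI] fun x => if x ≤ s then (f : ℝ → F) (1 - s + x) else 0

lemma muI_def : muI = (volume : Measure ℝ).restrict (Set.Icc 0 1) := rfl

instance : IsProbabilityMeasure muI :=
  ⟨by rw [muI_def, Measure.restrict_apply_univ, Real.volume_Icc]; norm_num⟩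

lemma muI_ne_zero : muI ≠ 0 := IsProbabilityMeasure.ne_zero muI

lemma muI_ae_mem : ∀ᵐ x ∂muI, x ∈ Set.Icc (0:ℝ) 1 := by
  rw [muI_def]; exact ae_restrict_mem measurableSet_Icc

/-- Pull back a.e. properties along the translation `x ↦ x - s`. -/
lemma ae_comp_sub {p : ℝ → Prop} (s : ℝ)
    (h : ∀ᵐ x ∂(volume : Measure ℝ), p x) : ∀ᵐ x ∂(volume : Measure ℝ), p (x - s) := by
  rw [Filter.eventually_iff, mem_ae_iff] at h ⊢
  have hset : {x : ℝ | p (x - s)}ᶜ = (fun x : ℝ => x + (-s)) ⁻¹' {x | p x}ᶜ := by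
    ext x; simp [sub_eq_add_neg]
  rw [hset, measure_preimage_add_right]
  exact h

lemma ae_comp_add {p : ℝ → Prop} (s : ℝ)
    (h : ∀ᵐ x ∂(volume : Measure ℝ), p x) : ∀ᵐ x ∂(volume : Measure ℝ), p (s + x) := by
  rw [Filter.eventually_iff, mem_ae_iff] at h ⊢
  have hset : {x : ℝ | p (s + x)}ᶜ = (fun x : ℝ => s + x) ⁻¹' {x | p x}ᶜ := by
    ext x; simp
  rw [hset, measure_preimage_add]
  exact h

section Phi
variable {F : Type} [NormedAddCommGroup F] [InnerProductSpace ℂ F]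

def Phi0 (s : ℝ) (u : ℝ → F) : ℝ → F := (Set.Ici s).indicator fun x => u (x - s)

def Phi1 (s : ℝ) (u : ℝ → F) : ℝ → F := (Set.Iic s).indicator fun x => u (1 - s + x)

lemma Phi0_congr {s : ℝ} (hs0 : 0 ≤ s) {u u' : ℝ → F} (h : u =ᵐ[muI] u') :
    Phi0 s u =ᵐ[muI] Phi0 s u' := by
  rw [muI_def] at h ⊢
  rw [Filter.EventuallyEq, ae_restrict_iff' measurableSet_Icc] at h ⊢
  filter_upwards [ae_comp_sub s h] with x hx hxI
  by_cases hxs : s ≤ x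
  · have hmem : x - s ∈ Set.Icc (0:ℝ) 1 :=
      ⟨by linarith, by linarith [hxI.2]⟩
    simp only [Phi0, Set.indicator_of_mem (Set.mem_Ici.mpr hxs)]
    exact hx hmem
  · simp only [Phi0, Set.indicator_of_notMem (fun hc => hxs (Set.mem_Ici.mp hc))]

lemma Phi1_congr {s : ℝ} (hs1 : s ≤ 1) {u u' : ℝ → F} (h : u =ᵐ[muI] u') :
    Phi1 s u =ᵐ[muI] Phi1 s u' := by
  rw [muI_def] at h ⊢
  rw [Filter.EventuallyEq, ae_restrict_iff' measurableSet_Icc] at h ⊢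
  filter_upwards [ae_comp_add (1 - s) h] with x hx hxI
  by_cases hxs : x ≤ s
  · have hmem : 1 - s + x ∈ Set.Icc (0:ℝ) 1 :=
      ⟨by linarith [hxI.1], by linarith⟩
    simp only [Phi1, Set.indicator_of_mem (Set.mem_Iic.mpr hxs)]
    exact hx hmem
  · simp only [Phi1, Set.indicator_of_notMem (fun hc => hxs (Set.mem_Iic.mp hc))]

lemma eLpNorm_Phi0_le {s : ℝ} (hs0 : 0 ≤ s) {u : ℝ → F} (hu : StronglyMeasurable u) :
    eLpNorm (Phi0 s u) 2 muI ≤ eLpNorm u 2 muI := by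
  have h1 : eLpNorm (Phi0 s u) 2 muI
      = eLpNorm (fun x => u (x - s)) 2 (muI.restrict (Set.Ici s)) :=
    eLpNorm_indicator_eq_eLpNorm_restrict measurableSet_Ici
  have h2 : muI.restrict (Set.Ici s) = volume.restrict (Set.Icc s 1) := by
    rw [muI_def, Measure.restrict_restrict measurableSet_Ici]
    congr 1
    ext x
    simp only [Set.mem_inter_iff, Set.mem_Ici, Set.mem_Icc]
    constructor
    · rintro ⟨h, h0, h1⟩; exact ⟨h, h1⟩
    · rintro ⟨h, h1⟩; exact ⟨h, le_trans hs0 h, h1⟩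
  have hmp : MeasurePreserving (fun x : ℝ => x - s)
      (volume.restrict (Set.Icc s 1)) (volume.restrict (Set.Icc 0 (1 - s))) := by
    have hbase : MeasurePreserving (fun x : ℝ => x - s) volume volume := by
      simpa [sub_eq_add_neg] using measurePreserving_add_right (volume : Measure ℝ) (-s)
    have := hbase.restrict_preimage (s := Set.Icc 0 (1 - s)) measurableSet_Icc
    rwa [Set.preimage_sub_const_Icc, zero_add, sub_add_cancel] at this
  have h3 : eLpNorm (fun x => u (x - s)) 2 (volume.restrict (Set.Icc s 1))
      = eLpNorm u 2 (volume.restrict (Set.Icc 0 (1 - s))) :=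
    eLpNorm_comp_measurePreserving hu.aestronglyMeasurable hmp
  have h4 : eLpNorm u 2 (volume.restrict (Set.Icc 0 (1 - s))) ≤ eLpNorm u 2 muI := by
    rw [muI_def]
    exact eLpNorm_mono_measure u
      (Measure.restrict_mono (Set.Icc_subset_Icc_right (by linarith)) le_rfl)
  calc eLpNorm (Phi0 s u) 2 muI
      = eLpNorm (fun x => u (x - s)) 2 (volume.restrict (Set.Icc s 1)) := by rw [h1, h2]
    _ = eLpNorm u 2 (volume.restrict (Set.Icc 0 (1 - s))) := h3
    _ ≤ eLpNorm u 2 muI := h4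

lemma eLpNorm_Phi1_le {s : ℝ} (hs0 : 0 ≤ s) (hs1 : s ≤ 1) {u : ℝ → F}
    (hu : StronglyMeasurable u) :
    eLpNorm (Phi1 s u) 2 muI ≤ eLpNorm u 2 muI := by
  have h1 : eLpNorm (Phi1 s u) 2 muI
      = eLpNorm (fun x => u (1 - s + x)) 2 (muI.restrict (Set.Iic s)) :=
    eLpNorm_indicator_eq_eLpNorm_restrict measurableSet_Iic
  have h2 : muI.restrict (Set.Iic s) = volume.restrict (Set.Icc 0 s) := by
    rw [muI_def, Measure.restrict_restrict measurableSet_Iic]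
    congr 1
    ext x
    simp only [Set.mem_inter_iff, Set.mem_Iic, Set.mem_Icc]
    constructor
    · rintro ⟨h, h0, h1⟩; exact ⟨h0, h⟩
    · rintro ⟨h0, h⟩; exact ⟨h, h0, le_trans h hs1⟩
  have hmp : MeasurePreserving (fun x : ℝ => 1 - s + x)
      (volume.restrict (Set.Icc 0 s)) (volume.restrict (Set.Icc (1 - s) 1)) := by
    have hbase : MeasurePreserving (fun x : ℝ => 1 - s + x) volume volume :=
      measurePreserving_add_left (volume : Measure ℝ) (1 - s)
    have := hbase.restrict_preimage (s := Set.Icc (1 - s) 1) measurableSet_Icc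
    rwa [Set.preimage_const_add_Icc, sub_self, show (1:ℝ) - (1 - s) = s by ring] at this
  have h3 : eLpNorm (fun x => u (1 - s + x)) 2 (volume.restrict (Set.Icc 0 s))
      = eLpNorm u 2 (volume.restrict (Set.Icc (1 - s) 1)) :=
    eLpNorm_comp_measurePreserving hu.aestronglyMeasurable hmp
  have h4 : eLpNorm u 2 (volume.restrict (Set.Icc (1 - s) 1)) ≤ eLpNorm u 2 muI := by
    rw [muI_def]
    exact eLpNorm_mono_measure u
      (Measure.restrict_mono (Set.Icc_subset_Icc_left (by linarith)) le_rfl)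
  calc eLpNorm (Phi1 s u) 2 muI
      = eLpNorm (fun x => u (1 - s + x)) 2 (volume.restrict (Set.Icc 0 s)) := by rw [h1, h2]
    _ = eLpNorm u 2 (volume.restrict (Set.Icc (1 - s) 1)) := h3
    _ ≤ eLpNorm u 2 muI := h4

lemma stronglyMeasurable_Phi0 {s : ℝ} {u : ℝ → F} (hu : StronglyMeasurable u) :
    StronglyMeasurable (Phi0 s u) :=
  (hu.comp_measurable (measurable_id.sub_const s)).indicator measurableSet_Ici

lemma stronglyMeasurable_Phi1 {s : ℝ} {u : ℝ → F} (hu : StronglyMeasurable u) :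
    StronglyMeasurable (Phi1 s u) :=
  (hu.comp_measurable (measurable_const_add (1 - s))).indicator measurableSet_Iic

lemma memLp_Phi0 {s : ℝ} (hs0 : 0 ≤ s) (f : Lp F 2 muI) : MemLp (Phi0 s (⇑f)) 2 muI :=
  ⟨(stronglyMeasurable_Phi0 (Lp.stronglyMeasurable f)).aestronglyMeasurable,
    lt_of_le_of_lt (eLpNorm_Phi0_le hs0 (Lp.stronglyMeasurable f)) (Lp.eLpNorm_lt_top f)⟩

lemma memLp_Phi1 {s : ℝ} (hs0 : 0 ≤ s) (hs1 : s ≤ 1) (f : Lp F 2 muI) :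
    MemLp (Phi1 s (⇑f)) 2 muI :=
  ⟨(stronglyMeasurable_Phi1 (Lp.stronglyMeasurable f)).aestronglyMeasurable,
    lt_of_le_of_lt (eLpNorm_Phi1_le hs0 hs1 (Lp.stronglyMeasurable f)) (Lp.eLpNorm_lt_top f)⟩

end Phi

section Ops
variable {F : Type} [NormedAddCommGroup F] [InnerProductSpace ℂ F]

/-- The operator `E_{0,s}`. -/
def mkT0 (s : ℝ) (hs0 : 0 ≤ s) : Lp F 2 muI →L[ℂ] Lp F 2 muI :=
  LinearMap.mkContinuous
    { toFun := fun f => (memLp_Phi0 hs0 f).toLp (Phi0 s (⇑f))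
      map_add' := by
        intro f g
        apply Lp.ext
        refine ((MemLp.coeFn_toLp _).trans ?_).trans (Lp.coeFn_add _ _).symm
        have h1 : Phi0 s (⇑(f + g)) =ᵐ[muI] Phi0 s (⇑f + ⇑g) :=
          Phi0_congr hs0 (Lp.coeFn_add f g)
        have h2 : Phi0 s (⇑f + ⇑g) = Phi0 s (⇑f) + Phi0 s (⇑g) := by
          funext x
          simp only [Phi0, Pi.add_apply]
          by_cases hx : x ∈ Set.Ici s <;>
            simp [Set.indicator_of_mem, Set.indicator_of_notMem, hx]
        refine h1.trans ?_
        rw [h2]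
        exact ((MemLp.coeFn_toLp _).symm.add (MemLp.coeFn_toLp _).symm)
      map_smul' := by
        intro c f
        simp only [RingHom.id_apply]
        apply Lp.ext
        refine ((MemLp.coeFn_toLp (memLp_Phi0 hs0 (c • f))).trans ?_).trans
          (Lp.coeFn_smul c ((memLp_Phi0 hs0 f).toLp (Phi0 s (⇑f)))).symm
        have h1 : Phi0 s (⇑(c • f)) =ᵐ[muI] Phi0 s (c • ⇑f) :=
          Phi0_congr hs0 (Lp.coeFn_smul c f)
        have h2 : Phi0 s (c • ⇑f) = c • Phi0 s (⇑f) := by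
          funext x
          simp only [Phi0, Pi.smul_apply]
          by_cases hx : x ∈ Set.Ici s <;>
            simp [Set.indicator_of_mem, Set.indicator_of_notMem, hx]
        refine h1.trans ?_
        rw [h2]
        exact (MemLp.coeFn_toLp (memLp_Phi0 hs0 f)).symm.const_smul c } 1
    (by
      intro f
      simp only [LinearMap.coe_mk, AddHom.coe_mk, one_mul]
      rw [Lp.norm_toLp, Lp.norm_def]
      exact ENNReal.toReal_mono (Lp.eLpNorm_lt_top f).ne
        (eLpNorm_Phi0_le hs0 (Lp.stronglyMeasurable f)))

/-- The operator `E_{1,s}`. -/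
def mkT1 (s : ℝ) (hs0 : 0 ≤ s) (hs1 : s ≤ 1) : Lp F 2 muI →L[ℂ] Lp F 2 muI :=
  LinearMap.mkContinuous
    { toFun := fun f => (memLp_Phi1 hs0 hs1 f).toLp (Phi1 s (⇑f))
      map_add' := by
        intro f g
        apply Lp.ext
        refine ((MemLp.coeFn_toLp _).trans ?_).trans (Lp.coeFn_add _ _).symm
        have h1 : Phi1 s (⇑(f + g)) =ᵐ[muI] Phi1 s (⇑f + ⇑g) :=
          Phi1_congr hs1 (Lp.coeFn_add f g)
        have h2 : Phi1 s (⇑f + ⇑g) = Phi1 s (⇑f) + Phi1 s (⇑g) := by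
          funext x
          simp only [Phi1, Pi.add_apply]
          by_cases hx : x ∈ Set.Iic s <;>
            simp [Set.indicator_of_mem, Set.indicator_of_notMem, hx]
        refine h1.trans ?_
        rw [h2]
        exact ((MemLp.coeFn_toLp _).symm.add (MemLp.coeFn_toLp _).symm)
      map_smul' := by
        intro c f
        simp only [RingHom.id_apply]
        apply Lp.ext
        refine ((MemLp.coeFn_toLp (memLp_Phi1 hs0 hs1 (c • f))).trans ?_).trans
          (Lp.coeFn_smul c ((memLp_Phi1 hs0 hs1 f).toLp (Phi1 s (⇑f)))).symm
        have h1 : Phi1 s (⇑(c • f)) =ᵐ[muI] Phi1 s (c • ⇑f) :=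
          Phi1_congr hs1 (Lp.coeFn_smul c f)
        have h2 : Phi1 s (c • ⇑f) = c • Phi1 s (⇑f) := by
          funext x
          simp only [Phi1, Pi.smul_apply]
          by_cases hx : x ∈ Set.Iic s <;>
            simp [Set.indicator_of_mem, Set.indicator_of_notMem, hx]
        refine h1.trans ?_
        rw [h2]
        exact (MemLp.coeFn_toLp (memLp_Phi1 hs0 hs1 f)).symm.const_smul c } 1
    (by
      intro f
      simp only [LinearMap.coe_mk, AddHom.coe_mk, one_mul]
      rw [Lp.norm_toLp, Lp.norm_def]
      exact ENNReal.toReal_mono (Lp.eLpNorm_lt_top f).ne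
        (eLpNorm_Phi1_le hs0 hs1 (Lp.stronglyMeasurable f)))

lemma mkT0_coe (s : ℝ) (hs0 : 0 ≤ s) (f : Lp F 2 muI) :
    ⇑((mkT0 s hs0 : Lp F 2 muI →L[ℂ] Lp F 2 muI) f) =ᵐ[muI] Phi0 s (⇑f) :=
  MemLp.coeFn_toLp (memLp_Phi0 hs0 f)

lemma mkT1_coe (s : ℝ) (hs0 : 0 ≤ s) (hs1 : s ≤ 1) (f : Lp F 2 muI) :
    ⇑((mkT1 s hs0 hs1 : Lp F 2 muI →L[ℂ] Lp F 2 muI) f) =ᵐ[muI] Phi1 s (⇑f) :=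
  MemLp.coeFn_toLp (memLp_Phi1 hs0 hs1 f)

lemma isE0_mkT0 (s : ℝ) (hs0 : 0 ≤ s) : IsE0 F s (mkT0 s hs0) := by
  intro f
  refine (mkT0_coe s hs0 f).trans (Filter.Eventually.of_forall fun x => ?_)
  simp [Phi0, Set.indicator_apply, Set.mem_Ici]

lemma isE1_mkT1 (s : ℝ) (hs0 : 0 ≤ s) (hs1 : s ≤ 1) : IsE1 F s (mkT1 s hs0 hs1) := by
  intro f
  refine (mkT1_coe s hs0 hs1 f).trans (Filter.Eventually.of_forall fun x => ?_)
  simp [Phi1, Set.indicator_apply, Set.mem_Iic]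

/-- The constant function with value `v` as an element of `L²([0,1], F)`. -/
def oneLp (v : F) : Lp F 2 muI := (memLp_const v).toLp (fun _ => v)

lemma oneLp_coe (v : F) : ⇑(oneLp v : Lp F 2 muI) =ᵐ[muI] fun _ => v :=
  MemLp.coeFn_toLp (memLp_const v)

lemma oneLp_add (v w : F) : (oneLp (v + w) : Lp F 2 muI) = oneLp v + oneLp w := by
  apply Lp.ext
  refine (oneLp_coe _).trans (((Lp.coeFn_add _ _).trans ?_).symm)
  filter_upwards [oneLp_coe (F := F) v, oneLp_coe (F := F) w] with x h1 h2
  simp [h1, h2]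

lemma oneLp_smul (c : ℂ) (v : F) : (oneLp (c • v) : Lp F 2 muI) = c • oneLp v := by
  apply Lp.ext
  refine (oneLp_coe _).trans (((Lp.coeFn_smul _ _).trans ?_).symm)
  filter_upwards [oneLp_coe (F := F) v] with x h1
  simp [h1]

lemma const_ae_unique {v w : F} (h : (fun _ : ℝ => v) =ᵐ[muI] fun _ => w) : v = w := by
  haveI : (ae muI).NeBot := ae_neBot.mpr muI_ne_zero
  exact h.exists.choose_spec

lemma norm_eq_of_ae_const {g : Lp F 2 muI} {w : F} (h : ⇑g =ᵐ[muI] fun _ => w) :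
    ‖g‖ = ‖w‖ := by
  rw [Lp.norm_def, eLpNorm_congr_ae h, eLpNorm_const _ (by norm_num) muI_ne_zero]
  simp

section Main
variable {F : Type} [NormedAddCommGroup F] [InnerProductSpace ℂ F]

lemma shift_step (B : Lp F 2 muI →L[ℂ] Lp F 2 muI)
    (hB0 : ∀ s : ℝ, 0 ≤ s → s < 1 → ∀ T : Lp F 2 muI →L[ℂ] Lp F 2 muI,
      IsE0 F s T → B ∘L T = T ∘L B)
    (hB1 : ∀ s : ℝ, 0 ≤ s → s < 1 → ∀ T : Lp F 2 muI →L[ℂ] Lp F 2 muI,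
      IsE1 F s T → B ∘L T = T ∘L B)
    (v : F) {c : ℝ} (hc0 : 0 < c) (hc1 : c < 1) :
    ∀ᵐ x ∂muI, x ≤ 1 - c → ⇑(B (oneLp v)) (c + x) = ⇑(B (oneLp v)) x := by
  have hb0 : 0 ≤ 1 - c := by linarith
  have hb1 : 1 - c < 1 := by linarith
  have hble : 1 - c ≤ 1 := by linarith
  set E1b : Lp F 2 muI →L[ℂ] Lp F 2 muI := mkT1 (1 - c) hb0 hble with hE1b
  set E0c : Lp F 2 muI →L[ℂ] Lp F 2 muI := mkT0 c hc0.le with hE0c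
  have comm1 : B ∘L E1b = E1b ∘L B := hB1 (1 - c) hb0 hb1 E1b (isE1_mkT1 _ hb0 hble)
  have comm0 : B ∘L E0c = E0c ∘L B := hB0 c hc0.le hc1 E0c (isE0_mkT0 c hc0.le)
  have claim : E1b (oneLp v) = E1b (E0c (oneLp v)) := by
    apply Lp.ext
    have l1 : ⇑(E1b (oneLp v)) =ᵐ[muI] Phi1 (1 - c) (fun _ => v) :=
      (mkT1_coe _ hb0 hble _).trans (Phi1_congr hble (oneLp_coe v))
    have l2 : ⇑(E1b (E0c (oneLp v))) =ᵐ[muI] Phi1 (1 - c) (Phi0 c (fun _ => v)) :=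
      (mkT1_coe _ hb0 hble _).trans
        (Phi1_congr hble ((mkT0_coe c hc0.le _).trans (Phi0_congr hc0.le (oneLp_coe v))))
    refine l1.trans (Filter.EventuallyEq.trans ?_ l2.symm)
    filter_upwards [muI_ae_mem] with x hxI
    by_cases hxb : x ∈ Set.Iic (1 - c)
    · rw [Phi1, Phi1, Set.indicator_of_mem hxb, Set.indicator_of_mem hxb,
        Phi0, Set.indicator_of_mem]
      exact Set.mem_Ici.mpr (by linarith [hxI.1])
    · rw [Phi1, Phi1, Set.indicator_of_notMem hxb, Set.indicator_of_notMem hxb]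
  have key : E1b (B (oneLp v)) = E1b (E0c (B (oneLp v))) := by
    have e1 : B (E1b (oneLp v)) = E1b (B (oneLp v)) := by
      have h := DFunLike.congr_fun comm1 (oneLp v)
      simpa using h
    have e2 : B (E1b (E0c (oneLp v))) = E1b (E0c (B (oneLp v))) := by
      have h1 := DFunLike.congr_fun comm1 (E0c (oneLp v))
      have h2 := DFunLike.congr_fun comm0 (oneLp v)
      simp only [ContinuousLinearMap.comp_apply] at h1 h2
      rw [h1, h2]
    rw [← e1, ← e2, claim]
  set g := B (oneLp v) with hg
  have l1 : ⇑(E1b g) =ᵐ[muI] Phi1 (1 - c) (⇑g) := mkT1_coe _ hb0 hble _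
  have l2 : ⇑(E1b (E0c g)) =ᵐ[muI] Phi1 (1 - c) (Phi0 c (⇑g)) :=
    (mkT1_coe _ hb0 hble _).trans (Phi1_congr hble (mkT0_coe c hc0.le _))
  have l1' : ⇑(E1b (E0c g)) =ᵐ[muI] Phi1 (1 - c) (⇑g) := key ▸ l1
  have main : Phi1 (1 - c) (⇑g) =ᵐ[muI] Phi1 (1 - c) (Phi0 c (⇑g)) := l1'.symm.trans l2
  filter_upwards [main, muI_ae_mem] with x hx hxI hxle
  have hxb : x ∈ Set.Iic (1 - c) := Set.mem_Iic.mpr hxle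
  rw [Phi1, Phi1, Set.indicator_of_mem hxb, Set.indicator_of_mem hxb, Phi0,
    Set.indicator_of_mem (Set.mem_Ici.mpr (by linarith [hxI.1] : c ≤ 1 - (1 - c) + x))] at hx
  have e3 : (1:ℝ) - (1 - c) + x = c + x := by ring
  have e4 : (1:ℝ) - (1 - c) + x - c = x := by ring
  calc ⇑g (c + x) = ⇑g (1 - (1 - c) + x) := by rw [e3]
    _ = ⇑g (1 - (1 - c) + x - c) := hx
    _ = ⇑g x := by rw [e4]

lemma exists_const_rep (B : Lp F 2 muI →L[ℂ] Lp F 2 muI)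
    (hB0 : ∀ s : ℝ, 0 ≤ s → s < 1 → ∀ T : Lp F 2 muI →L[ℂ] Lp F 2 muI,
      IsE0 F s T → B ∘L T = T ∘L B)
    (hB1 : ∀ s : ℝ, 0 ≤ s → s < 1 → ∀ T : Lp F 2 muI →L[ℂ] Lp F 2 muI,
      IsE1 F s T → B ∘L T = T ∘L B)
    (v : F) :
    ∃ w : F, ⇑(B (oneLp v)) =ᵐ[muI] fun _ => w := by
  set G : ℝ → F := ⇑(B (oneLp v)) with hGdef
  have hG : StronglyMeasurable G := Lp.stronglyMeasurable _
  have hshift : ∀ c : ℝ, 0 < c → c < 1 → ∀ᵐ x ∂muI, x ≤ 1 - c → G (c + x) = G x :=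
    fun c hc0 hc1 => shift_step B hB0 hB1 v hc0 hc1
  have hGad : StronglyMeasurable (fun p : ℝ × ℝ => G (p.1 + p.2)) :=
    hG.comp_measurable (measurable_fst.add measurable_snd)
  have hG2 : StronglyMeasurable (fun p : ℝ × ℝ => G p.2) :=
    hG.comp_measurable measurable_snd
  have hG1 : StronglyMeasurable (fun p : ℝ × ℝ => G p.1) :=
    hG.comp_measurable measurable_fst
  have hAeq : MeasurableSet {p : ℝ × ℝ | G (p.1 + p.2) = G p.2} :=
    hGad.measurableSet_eq_fun hG2
  have hA12 : MeasurableSet {p : ℝ × ℝ | G p.1 = G p.2} :=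
    hG1.measurableSet_eq_fun hG2
  set D : Set (ℝ × ℝ) :=
    ({p : ℝ × ℝ | 0 ≤ p.1} ∩ {p | 0 ≤ p.2} ∩ {p | p.1 + p.2 ≤ 1}) ∩
      {p : ℝ × ℝ | G (p.1 + p.2) = G p.2}ᶜ with hDdef
  have hD : MeasurableSet D :=
    (((measurableSet_le measurable_const measurable_fst).inter
      (measurableSet_le measurable_const measurable_snd)).inter
      (measurableSet_le (measurable_fst.add measurable_snd) measurable_const)).inter hAeq.compl
  have hslice : ∀ c : ℝ, volume (Prod.mk c ⁻¹' D) = 0 := by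
    intro c
    by_cases hc0 : 0 < c
    · by_cases hc1 : c < 1
      · have h := hshift c hc0 hc1
        rw [muI_def, ae_restrict_iff' measurableSet_Icc, Filter.eventually_iff,
          mem_ae_iff] at h
        refine measure_mono_null (fun t ht => ?_) h
        simp only [hDdef, Set.mem_preimage, Set.mem_inter_iff, Set.mem_setOf_eq,
          Set.mem_compl_iff] at ht
        obtain ⟨⟨⟨h1, h2⟩, h3⟩, h4⟩ := ht
        simp only [Set.mem_compl_iff, Set.mem_setOf_eq]
        intro himp
        exact h4 (himp ⟨h2, by linarith⟩ (by linarith))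
      · refine measure_mono_null (fun t ht => ?_) (measure_singleton (0:ℝ))
        simp only [hDdef, Set.mem_preimage, Set.mem_inter_iff, Set.mem_setOf_eq,
          Set.mem_compl_iff] at ht
        obtain ⟨⟨⟨h1, h2⟩, h3⟩, h4⟩ := ht
        have : t = 0 := by linarith [not_lt.mp hc1]
        simp [this]
    · refine measure_mono_null (fun t ht => ?_) (measure_empty (μ := (volume : Measure ℝ)))
      simp only [hDdef, Set.mem_preimage, Set.mem_inter_iff, Set.mem_setOf_eq,
        Set.mem_compl_iff] at ht
      obtain ⟨⟨⟨h1, h2⟩, h3⟩, h4⟩ := ht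
      have hc : c = 0 := le_antisymm (not_lt.mp hc0) h1
      exact absurd (by rw [hc, zero_add]) h4
  have hDnull : (volume.prod volume) D = 0 := by
    rw [Measure.prod_apply hD]
    simp [hslice]
  set E : Set (ℝ × ℝ) :=
    ({p : ℝ × ℝ | 0 ≤ p.2} ∩ {p | p.2 ≤ p.1} ∩ {p | p.1 ≤ 1}) ∩
      {p : ℝ × ℝ | G p.1 = G p.2}ᶜ with hEdef
  have hE : MeasurableSet E :=
    (((measurableSet_le measurable_const measurable_snd).inter
      (measurableSet_le measurable_snd measurable_fst)).inter
      (measurableSet_le measurable_fst measurable_const)).inter hA12.compl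
  have hEnull : (volume.prod volume) E = 0 := by
    rw [Measure.prod_apply_symm hE]
    have hsl : ∀ t : ℝ, volume ((fun u => (u, t)) ⁻¹' E) = volume ((fun c => (c, t)) ⁻¹' D) := by
      intro t
      have hpre : (fun c : ℝ => (c, t)) ⁻¹' D
          = (fun c : ℝ => c + t) ⁻¹' ((fun u : ℝ => (u, t)) ⁻¹' E) := by
        ext c
        simp only [hDdef, hEdef, Set.mem_preimage, Set.mem_inter_iff, Set.mem_setOf_eq,
          Set.mem_compl_iff]
        constructor
        · rintro ⟨⟨⟨h1, h2⟩, h3⟩, h4⟩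
          exact ⟨⟨⟨h2, by linarith⟩, h3⟩, h4⟩
        · rintro ⟨⟨⟨h1, h2⟩, h3⟩, h4⟩
          exact ⟨⟨⟨by linarith, h1⟩, h3⟩, h4⟩
      rw [hpre, measure_preimage_add_right]
    calc ∫⁻ t, volume ((fun u => (u, t)) ⁻¹' E) ∂volume
        = ∫⁻ t, volume ((fun c => (c, t)) ⁻¹' D) ∂volume := lintegral_congr hsl
      _ = (volume.prod volume) D := (Measure.prod_apply_symm hD).symm
      _ = 0 := hDnull
  have hswap : (volume.prod volume) (Prod.swap ⁻¹' E) = 0 := by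
    rw [Measure.measurePreserving_swap.measure_preimage
      hE.nullMeasurableSet]
    exact hEnull
  have hbad : (muI.prod muI) {p : ℝ × ℝ | G p.1 = G p.2}ᶜ = 0 := by
    rw [muI_def, Measure.prod_restrict, Measure.restrict_apply hA12.compl]
    refine measure_mono_null (fun p hp => ?_) (measure_union_null hEnull hswap)
    obtain ⟨hne, hmem⟩ := hp
    rw [Set.mem_prod] at hmem
    obtain ⟨⟨h01, h11⟩, h02, h12⟩ := hmem
    rcases le_total p.2 p.1 with hle | hle
    · exact Or.inl ⟨⟨⟨h02, hle⟩, h11⟩, hne⟩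
    · exact Or.inr ⟨⟨⟨h01, hle⟩, h12⟩, fun h => hne h.symm⟩
  have hprod_ae : ∀ᵐ p ∂(muI.prod muI), G p.1 = G p.2 := by
    rw [Filter.eventually_iff, mem_ae_iff]
    exact hbad
  have h5 := Measure.ae_ae_of_ae_prod hprod_ae
  haveI : (Filter.NeBot (ae muI)) := ae_neBot.mpr muI_ne_zero
  obtain ⟨u0, hu0⟩ := h5.exists
  exact ⟨G u0, by filter_upwards [hu0] with t ht using ht.symm⟩

end Main

section Final
variable {F : Type} [NormedAddCommGroup F] [InnerProductSpace ℂ F]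

lemma indLp_zero {s : Set ℝ} (hs : MeasurableSet s) (h : muI s = 0) (v : F) :
    (indicatorConstLp 2 hs (measure_ne_top muI s) v : Lp F 2 muI) = 0 := by
  apply Lp.ext
  refine indicatorConstLp_coeFn.trans (Filter.EventuallyEq.trans ?_ (Lp.coeFn_zero F 2 muI).symm)
  have hnm : ∀ᵐ x ∂muI, x ∉ s := measure_eq_zero_iff_ae_notMem.mp h
  filter_upwards [hnm] with x hx
  simp [Set.indicator_of_notMem hx]

theorem commutant_main (F : Type) [NormedAddCommGroup F] [InnerProductSpace ℂ F]
    (B : Lp F 2 muI →L[ℂ] Lp F 2 muI)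
    (hB0 : ∀ s : ℝ, 0 ≤ s → s < 1 → ∀ T : Lp F 2 muI →L[ℂ] Lp F 2 muI,
      IsE0 F s T → B ∘L T = T ∘L B)
    (hB1 : ∀ s : ℝ, 0 ≤ s → s < 1 → ∀ T : Lp F 2 muI →L[ℂ] Lp F 2 muI,
      IsE1 F s T → B ∘L T = T ∘L B) :
    ∃ C : F →L[ℂ] F, ∀ f : Lp F 2 muI,
      (B f : ℝ → F) =ᵐ[muI] fun x => C ((f : ℝ → F) x) := by
  classical
  have hex : ∀ v : F, ∃ w : F, ⇑(B (oneLp v)) =ᵐ[muI] fun _ => w :=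
    fun v => exists_const_rep B hB0 hB1 v
  choose Cw hCw using hex
  have hCadd : ∀ v w, Cw (v + w) = Cw v + Cw w := by
    intro v w
    apply const_ae_unique (F := F)
    refine (hCw (v + w)).symm.trans ?_
    rw [oneLp_add, map_add]
    refine (Lp.coeFn_add _ _).trans ?_
    filter_upwards [hCw v, hCw w] with x h1 h2
    simp [h1, h2]
  have hCsmul : ∀ (a : ℂ) (v : F), Cw (a • v) = a • Cw v := by
    intro a v
    apply const_ae_unique (F := F)
    refine (hCw (a • v)).symm.trans ?_
    rw [oneLp_smul, ContinuousLinearMap.map_smul]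
    refine (Lp.coeFn_smul _ _).trans ?_
    filter_upwards [hCw v] with x h1
    simp [h1]
  have hCbound : ∀ v, ‖Cw v‖ ≤ ‖B‖ * ‖v‖ := by
    intro v
    have h1 : ‖B (oneLp v)‖ = ‖Cw v‖ := norm_eq_of_ae_const (hCw v)
    have h2 : ‖(oneLp v : Lp F 2 muI)‖ = ‖v‖ := norm_eq_of_ae_const (oneLp_coe v)
    calc ‖Cw v‖ = ‖B (oneLp v)‖ := h1.symm
      _ ≤ ‖B‖ * ‖(oneLp v : Lp F 2 muI)‖ := B.le_opNorm _
      _ = ‖B‖ * ‖v‖ := by rw [h2]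
  set C : F →L[ℂ] F := LinearMap.mkContinuous
    { toFun := Cw
      map_add' := hCadd
      map_smul' := hCsmul } ‖B‖ hCbound with hCdef
  have hCapp : ∀ v, C v = Cw v := fun v => rfl
  set Cl : Lp F 2 muI →L[ℂ] Lp F 2 muI := ContinuousLinearMap.compLpL 2 muI C with hCldef
  have hCl_coe : ∀ f : Lp F 2 muI, ⇑(Cl f) =ᵐ[muI] fun x => C (⇑f x) :=
    fun f => ContinuousLinearMap.coeFn_compLpL C f
  have hone : ∀ v : F, B (oneLp v) = Cl (oneLp v) := by
    intro v
    apply Lp.ext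
    refine (hCw v).trans (Filter.EventuallyEq.symm ?_)
    refine (hCl_coe (oneLp v)).trans ?_
    filter_upwards [oneLp_coe v] with x hx
    rw [hx]
    exact hCapp v
  have hIci : ∀ (v : F) (a : ℝ),
      B (indicatorConstLp 2 measurableSet_Ici (measure_ne_top muI (Set.Ici a)) v)
        = Cl (indicatorConstLp 2 measurableSet_Ici (measure_ne_top muI (Set.Ici a)) v) := by
    intro v a
    by_cases ha0 : 0 ≤ a
    · by_cases ha1 : a < 1
      · -- main case : use the shift operator
        have hEq : indicatorConstLp 2 measurableSet_Ici (measure_ne_top muI (Set.Ici a)) v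
            = (mkT0 a ha0 : Lp F 2 muI →L[ℂ] Lp F 2 muI) (oneLp v) := by
          apply Lp.ext
          refine indicatorConstLp_coeFn.trans (Filter.EventuallyEq.symm ?_)
          exact (mkT0_coe a ha0 (oneLp v)).trans (Phi0_congr ha0 (oneLp_coe v))
        have comm0 := hB0 a ha0 ha1 (mkT0 a ha0) (isE0_mkT0 a ha0)
        have happ : B ((mkT0 a ha0 : Lp F 2 muI →L[ℂ] Lp F 2 muI) (oneLp v))
            = (mkT0 a ha0 : Lp F 2 muI →L[ℂ] Lp F 2 muI) (B (oneLp v)) := by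
          have h := DFunLike.congr_fun comm0 (oneLp v)
          simpa using h
        rw [hEq, happ]
        apply Lp.ext
        refine ((mkT0_coe a ha0 _).trans (Phi0_congr ha0 (hCw v))).trans
          (Filter.EventuallyEq.symm ?_)
        refine (hCl_coe _).trans ?_
        rw [← hEq]
        filter_upwards [indicatorConstLp_coeFn (p := 2) (hs := measurableSet_Ici)
          (hμs := measure_ne_top muI (Set.Ici a)) (c := v)] with x hx
        rw [hx]
        simp only [Phi0]
        by_cases hmem : x ∈ Set.Ici a
        · rw [Set.indicator_of_mem hmem, Set.indicator_of_mem hmem]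
          exact (hCapp v).symm
        · rw [Set.indicator_of_notMem hmem, Set.indicator_of_notMem hmem]
          exact map_zero C
      · -- 1 ≤ a : the indicator is a.e. zero
        have ha1' : 1 ≤ a := not_lt.mp ha1
        have hnull : muI (Set.Ici a) = 0 := by
          rw [muI_def, Measure.restrict_apply measurableSet_Ici]
          refine measure_mono_null (fun x hx => ?_) (measure_singleton (1 : ℝ))
          have hx1 : x = 1 := le_antisymm hx.2.2 (le_trans ha1' hx.1)
          simp [hx1]
        rw [indLp_zero measurableSet_Ici hnull v, map_zero, map_zero]
    · -- a < 0 : the indicator is a.e. the constant function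
      have ha : a < 0 := not_le.mp ha0
      have hEq : indicatorConstLp 2 measurableSet_Ici (measure_ne_top muI (Set.Ici a)) v
          = (oneLp v : Lp F 2 muI) := by
        apply Lp.ext
        refine indicatorConstLp_coeFn.trans
          (Filter.EventuallyEq.trans ?_ (oneLp_coe v).symm)
        filter_upwards [muI_ae_mem] with x hx
        exact Set.indicator_of_mem (le_trans ha.le hx.1) _
      rw [hEq]
      exact hone v
  -- π-system induction: the identity holds for indicators of all measurable sets
  have hAll : ∀ (v : F) {s : Set ℝ} (hs : MeasurableSet s),
      B (indicatorConstLp 2 hs (measure_ne_top muI s) v)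
        = Cl (indicatorConstLp 2 hs (measure_ne_top muI s) v) := by
    intro v
    have hgen : (inferInstance : MeasurableSpace ℝ)
        = MeasurableSpace.generateFrom (Set.range Set.Ici) := by
      rw [(inferInstance : BorelSpace ℝ).measurable_eq, borel_eq_generateFrom_Ici ℝ]
    have H : ∀ s : Set ℝ, MeasurableSet s → ∀ (hs : MeasurableSet s),
        B (indicatorConstLp 2 hs (measure_ne_top muI s) v)
          = Cl (indicatorConstLp 2 hs (measure_ne_top muI s) v) := by
      refine MeasurableSpace.induction_on_inter (C := fun s _ => ∀ (hs : MeasurableSet s),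
        B (indicatorConstLp 2 hs (measure_ne_top muI s) v)
          = Cl (indicatorConstLp 2 hs (measure_ne_top muI s) v))
        hgen isPiSystem_Ici ?_ ?_ ?_ ?_
      · intro hs
        rw [indLp_zero hs (by simp) v, map_zero, map_zero]
      · rintro t ⟨a, rfl⟩ hs
        exact hIci v a
      · intro t htm hPt hsc
        have e : indicatorConstLp 2 hsc (measure_ne_top muI tᶜ) v
            = oneLp v - indicatorConstLp 2 htm (measure_ne_top muI t) v := by
          apply Lp.ext
          refine indicatorConstLp_coeFn.trans
            (Filter.EventuallyEq.trans ?_ (Lp.coeFn_sub _ _).symm)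
          filter_upwards [oneLp_coe (F := F) v,
            indicatorConstLp_coeFn (p := 2) (hs := htm)
              (hμs := measure_ne_top muI t) (c := v)] with x h1 h2
          simp only [Pi.sub_apply, h1, h2]
          by_cases hmem : x ∈ t
          · rw [Set.indicator_of_notMem (by simpa using hmem), Set.indicator_of_mem hmem]
            simp
          · rw [Set.indicator_of_mem (by simpa using hmem), Set.indicator_of_notMem hmem]
            simp
        rw [e, map_sub, map_sub, hPt htm, hone v]
      · intro f hdisj hmeas hPf hsU
        set U : ℕ → Set ℝ := fun N => ⋃ i ∈ Finset.range N, f i with hUdef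
        have hUmeas : ∀ N, MeasurableSet (U N) :=
          fun N => (Finset.range N).measurableSet_biUnion fun i _ => hmeas i
        have hUsub : ∀ N, U N ⊆ ⋃ i, f i := by
          intro N x hx
          simp only [hUdef, Set.mem_iUnion, Finset.mem_range] at hx
          obtain ⟨i, _, hi⟩ := hx
          exact Set.mem_iUnion.mpr ⟨i, hi⟩
        have hPU : ∀ N, B (indicatorConstLp 2 (hUmeas N) (measure_ne_top muI (U N)) v)
            = Cl (indicatorConstLp 2 (hUmeas N) (measure_ne_top muI (U N)) v) := by
          intro N
          induction N with
          | zero =>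
            have h0 : muI (U 0) = 0 := by simp [hUdef]
            rw [indLp_zero (hUmeas 0) h0 v, map_zero, map_zero]
          | succ N ih =>
            have hsplit : indicatorConstLp 2 (hUmeas (N + 1))
                  (measure_ne_top muI (U (N + 1))) v
                = indicatorConstLp 2 (hUmeas N) (measure_ne_top muI (U N)) v
                  + indicatorConstLp 2 (hmeas N) (measure_ne_top muI (f N)) v := by
              apply Lp.ext
              refine indicatorConstLp_coeFn.trans
                (Filter.EventuallyEq.trans ?_ (Lp.coeFn_add _ _).symm)
              filter_upwards [indicatorConstLp_coeFn (p := 2) (hs := hUmeas N)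
                  (hμs := measure_ne_top muI (U N)) (c := v),
                indicatorConstLp_coeFn (p := 2) (hs := hmeas N)
                  (hμs := measure_ne_top muI (f N)) (c := v)] with x h1 h2
              simp only [Pi.add_apply, h1, h2]
              have hUN1 : U (N + 1) = U N ∪ f N := by
                simp only [hUdef, Finset.range_add_one, Finset.set_biUnion_insert]
                exact Set.union_comm _ _
              rw [hUN1]
              by_cases hxU : x ∈ U N
              · have hxf : x ∉ f N := by
                  intro hxf
                  simp only [hUdef, Set.mem_iUnion, Finset.mem_range] at hxU
                  obtain ⟨i, hiN, hxi⟩ := hxU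
                  exact Set.disjoint_left.mp (hdisj (Nat.ne_of_lt hiN)) hxi hxf
                rw [Set.indicator_of_mem (Set.mem_union_left _ hxU),
                  Set.indicator_of_mem hxU, Set.indicator_of_notMem hxf, add_zero]
              · by_cases hxf : x ∈ f N
                · rw [Set.indicator_of_mem (Set.mem_union_right _ hxf),
                    Set.indicator_of_notMem hxU, Set.indicator_of_mem hxf, zero_add]
                · rw [Set.indicator_of_notMem (by simp [hxU, hxf]),
                    Set.indicator_of_notMem hxU, Set.indicator_of_notMem hxf, add_zero]
            rw [hsplit, map_add, map_add, ih, hPf N]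
        -- convergence
        have hUnionMeas : MeasurableSet (⋃ i, f i) := MeasurableSet.iUnion hmeas
        set T : ℕ → Set ℝ := fun N => (⋃ i, f i) \ U N with hTdef
        have hTmeas : ∀ N, MeasurableSet (T N) := fun N => hUnionMeas.diff (hUmeas N)
        have hdiffN : ∀ N, indicatorConstLp 2 hUnionMeas (measure_ne_top muI _) v
              - indicatorConstLp 2 (hUmeas N) (measure_ne_top muI (U N)) v
            = indicatorConstLp 2 (hTmeas N) (measure_ne_top muI (T N)) v := by
          intro N
          apply Lp.ext
          refine Filter.EventuallyEq.trans ((Lp.coeFn_sub _ _).trans ?_)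
            indicatorConstLp_coeFn.symm
          filter_upwards [indicatorConstLp_coeFn (p := 2) (hs := hUnionMeas)
              (hμs := measure_ne_top muI (⋃ i, f i)) (c := v),
            indicatorConstLp_coeFn (p := 2) (hs := hUmeas N)
              (hμs := measure_ne_top muI (U N)) (c := v)] with x h1 h2
          simp only [Pi.sub_apply, h1, h2]
          by_cases hxU : x ∈ U N
          · rw [Set.indicator_of_mem (hUsub N hxU), Set.indicator_of_mem hxU,
              Set.indicator_of_notMem (fun hc => hc.2 hxU), sub_self]
          · by_cases hxA : x ∈ ⋃ i, f i
            · rw [Set.indicator_of_mem hxA, Set.indicator_of_notMem hxU,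
                Set.indicator_of_mem (Set.mem_diff_of_mem hxA hxU), sub_zero]
            · rw [Set.indicator_of_notMem hxA, Set.indicator_of_notMem hxU,
                Set.indicator_of_notMem (fun hc => hxA hc.1), sub_zero]
        have hTanti : Antitone T := by
          intro m n hmn x hx
          refine ⟨hx.1, fun hc => hx.2 ?_⟩
          simp only [hUdef, Set.mem_iUnion, Finset.mem_range] at hc ⊢
          obtain ⟨i, him, hxi⟩ := hc
          exact ⟨i, lt_of_lt_of_le him hmn, hxi⟩
        have hTinter : ⋂ N, T N = ∅ := by
          refine Set.eq_empty_iff_forall_notMem.mpr fun x hx => ?_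
          rw [Set.mem_iInter] at hx
          obtain ⟨i, hxi⟩ := Set.mem_iUnion.mp (hx 0).1
          refine (hx (i + 1)).2 ?_
          simp only [hUdef, Set.mem_iUnion, Finset.mem_range]
          exact ⟨i, Nat.lt_succ_self i, hxi⟩
        have htm : Filter.Tendsto (fun N => muI (T N)) Filter.atTop (nhds 0) := by
          have h := tendsto_measure_iInter_atTop (μ := muI)
            (fun N => (hTmeas N).nullMeasurableSet) hTanti ⟨0, measure_ne_top muI _⟩
          rwa [hTinter, measure_empty] at h
        have hreal : Filter.Tendsto (fun N => (muI (T N)).toReal) Filter.atTop (nhds 0) := by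
          have h := (ENNReal.tendsto_toReal (by norm_num : (0 : ℝ≥0∞) ≠ ⊤)).comp htm
          simpa [Function.comp_def] using h
        have hnorm : Filter.Tendsto
            (fun N => ‖indicatorConstLp 2 (hUmeas N) (measure_ne_top muI (U N)) v
              - indicatorConstLp 2 hUnionMeas (measure_ne_top muI _) v‖)
            Filter.atTop (nhds 0) := by
          have hrpow : Filter.Tendsto
              (fun N => ‖v‖ * ((muI (T N)).toReal) ^ (1 / (2 : ℝ≥0∞).toReal))
              Filter.atTop (nhds 0) := by
            have h2 := hreal.rpow_const (p := 1 / (2 : ℝ≥0∞).toReal)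
              (Or.inr (by norm_num))
            rw [Real.zero_rpow (by norm_num)] at h2
            simpa using tendsto_const_nhds.mul h2
          refine hrpow.congr fun N => ?_
          rw [norm_sub_rev, hdiffN N, norm_indicatorConstLp (by norm_num) (by norm_num)]
          rfl
        have hlim : Filter.Tendsto
            (fun N => indicatorConstLp 2 (hUmeas N) (measure_ne_top muI (U N)) v)
            Filter.atTop (nhds (indicatorConstLp 2 hUnionMeas (measure_ne_top muI _) v)) :=
          tendsto_iff_norm_sub_tendsto_zero.mpr hnorm
        have hlimB := (B.continuous.tendsto _).comp hlim
        have hlimCl := (Cl.continuous.tendsto _).comp hlim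
        exact tendsto_nhds_unique (hlimB.congr fun N => hPU N) (hlimCl.congr fun N => rfl)
    intro s hs
    exact H s hs hs
  -- extend to all of Lp by density
  have hfinal : ∀ f : Lp F 2 muI, B f = Cl f := by
    refine Lp.induction (ENNReal.ofNat_ne_top) (fun f => B f = Cl f) ?_ ?_ ?_
    · intro c s hs hμs
      rw [Lp.simpleFunc.coe_indicatorConst]
      exact hAll c hs
    · intro f g hf hg hdisj hPf hPg
      rw [map_add, map_add, hPf, hPg]
    · exact isClosed_eq B.continuous Cl.continuous
  refine ⟨C, fun f => ?_⟩
  rw [hfinal f]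
  exact hCl_coe f


/-- An operator on `L²([0,1], F)` commuting with all the partial isometries `E_{0,s}^F`
and `E_{1,s}^F`, `0 ≤ s < 1`, is of the form `I_{L²[0,1]} ⊗ C` for a bounded operator `C`
on `F`. -/
theorem commutant_of_E0_E1 (F : Type) [NormedAddCommGroup F] [InnerProductSpace ℂ F]
    [CompleteSpace F] [TopologicalSpace.SeparableSpace F]
    (B : Lp F 2 muI →L[ℂ] Lp F 2 muI)
    (hB0 : ∀ s : ℝ, 0 ≤ s → s < 1 → ∀ T : Lp F 2 muI →L[ℂ] Lp F 2 muI,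
      IsE0 F s T → B ∘L T = T ∘L B)
    (hB1 : ∀ s : ℝ, 0 ≤ s → s < 1 → ∀ T : Lp F 2 muI →L[ℂ] Lp F 2 muI,
      IsE1 F s T → B ∘L T = T ∘L B) :
    ∃ C : F →L[ℂ] F, ∀ f : Lp F 2 muI,
      (B f : ℝ → F) =ᵐ[muI] fun x => C ((f : ℝ → F) x) := by
  exact commutant_main F B hB0 hB1

end Final

end Ops

end
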